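/- For m ≥ 5, let H = K_{m,m} \ E(C_{2m}) and W a resolving set of H. If a gap of W contains k vertices with 2 ≤ k ≤ 4, then each neighboring gap (sharing an end point in W) contains at most one vertex. -/

import Mathlib

/-- `W` resolves `G`: every vertex is determined by its distance vector to `W`. -/
def Resolves {V : Type*} (G : SimpleGraph V) (W : Set V) : Prop :=
  ∀ u v : V, (∀ w ∈ W, G.dist u w = G.dist v w) → u = v

/-- Metric dimension: minimum cardinality of a (finite) resolving set. -/
noncomputable def metricDim {V : Type*} (G : SimpleGraph V) : ℕ :=
  sInf {k | ∃ W : Set V, W.Finite ∧ W.ncard = k ∧ Resolves G W}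
/-- `K_{m,m}` minus the Hamiltonian cycle `x₁ y₁ x₂ y₂ … x_m y_m x₁` (0-indexed:
cycle edges are `xᵢ yᵢ` and `yᵢ x_{i+1 mod m}`). -/
def cycGraph (m : ℕ) : SimpleGraph (Fin m ⊕ Fin m) where
  Adj u v := match u, v with
    | Sum.inl i, Sum.inr j => j ≠ i ∧ (i : ℕ) ≠ ((j : ℕ) + 1) % m
    | Sum.inr j, Sum.inl i => j ≠ i ∧ (i : ℕ) ≠ ((j : ℕ) + 1) % m
    | _, _ => False
  symm := ⟨by rintro (i|i) (j|j) h <;> exact h⟩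
  loopless := ⟨by rintro (i|i) h <;> exact h⟩

/-- Position `k` (taken mod `2m`) along the Hamiltonian cycle
`x₁ y₁ x₂ y₂ …`: even positions `2i ↦ xᵢ`, odd positions `2i+1 ↦ yᵢ`. -/
def cyc (m : ℕ) [NeZero m] (k : ℕ) : Fin m ⊕ Fin m :=
  if (k % (2 * m)) % 2 = 0 then
    Sum.inl ⟨k % (2 * m) / 2, by
      have hm : 0 < m := Nat.pos_of_ne_zero (NeZero.ne m)
      have h : k % (2 * m) < 2 * m := Nat.mod_lt _ (by omega)
      exact Nat.div_lt_of_lt_mul (by omega)⟩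
  else
    Sum.inr ⟨k % (2 * m) / 2, by
      have hm : 0 < m := Nat.pos_of_ne_zero (NeZero.ne m)
      have h : k % (2 * m) < 2 * m := Nat.mod_lt _ (by omega)
      exact Nat.div_lt_of_lt_mul (by omega)⟩

/-- `W` has a gap of exactly `L` vertices starting at cycle position `s`:
the positions `s` and `s+L+1` are in `W` and the `L` positions strictly between are not. -/
def IsGap (m : ℕ) [NeZero m] (W : Set (Fin m ⊕ Fin m)) (s L : ℕ) : Prop :=
  cyc m s ∈ W ∧ cyc m (s + L + 1) ∈ W ∧ ∀ t, 1 ≤ t → t ≤ L → cyc m (s + t) ∉ W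
/-!
In `K_{m,m}` minus a Hamiltonian cycle with `m ≥ 5`, any two vertices on the same side have a
common neighbour, so distances are `1` between adjacent vertices, `2` between distinct vertices
on the same side and `3` between non-adjacent vertices on opposite sides. Two vertices on the same
side are therefore separated only by vertices of the symmetric difference of their
neighbourhoods. For the vertices at cycle positions `q + 1` and `q + 3` this symmetric difference
consists of the vertices at positions `q` and `q + 4`, so a resolving set meets the positions
`q, q + 1, q + 3, q + 4`. Two neighbouring gaps with at least two vertices each would contain all
four of them, with `q + 2` their common end point.
-/

open SimpleGraph Sum

namespace SimpleGraph

variable {α β : Type*} {G : SimpleGraph (α ⊕ β)} {u v w : α ⊕ β}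

lemma isLeft_ne_of_adj (hG : G ≤ completeBipartiteGraph α β) (h : G.Adj u v) :
    u.isLeft ≠ v.isLeft := by
  have := hG h
  cases u <;> cases v <;> simp_all [completeBipartiteGraph]

lemma dist_eq_two_of_isLeft_eq (hG : G ≤ completeBipartiteGraph α β)
    (hcommon : ∀ u v, u.isLeft = v.isLeft → (G.commonNeighbors u v).Nonempty)
    (huv : u ≠ v) (hside : u.isLeft = v.isLeft) : G.dist u v = 2 := by
  have hadj : ¬ G.Adj u v := fun h => isLeft_ne_of_adj hG h hside
  simp [dist, edist_eq_two_iff.mpr ⟨huv, hadj, hcommon u v hside⟩]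

lemma dist_eq_three_of_isLeft_ne (hG : G ≤ completeBipartiteGraph α β)
    (hcommon : ∀ u v, u.isLeft = v.isLeft → (G.commonNeighbors u v).Nonempty)
    (hadj : ¬ G.Adj u v) (hside : u.isLeft ≠ v.isLeft) : G.dist u v = 3 := by
  obtain ⟨c, hc⟩ := hcommon u u rfl
  rw [mem_commonNeighbors] at hc
  have hcv : c.isLeft = v.isLeft := by
    have := isLeft_ne_of_adj hG hc.1
    revert hside this; cases u.isLeft <;> cases c.isLeft <;> cases v.isLeft <;> simp
  obtain ⟨d, hd⟩ := hcommon c v hcv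
  rw [mem_commonNeighbors] at hd
  have hle : G.edist u v ≤ 3 :=
    (Walk.cons hc.1 (Walk.cons hd.1 (Walk.cons hd.2.symm Walk.nil))).edist_le
  have hlt : 2 < G.edist u v := by
    refine two_lt_edist_iff.mpr ⟨fun h => hside (h ▸ rfl), hadj, ?_⟩
    refine Set.eq_empty_of_forall_notMem fun x hx => ?_
    rw [mem_commonNeighbors] at hx
    have h1 := isLeft_ne_of_adj hG hx.1
    have h2 := isLeft_ne_of_adj hG hx.2
    revert hside h1 h2; cases u.isLeft <;> cases x.isLeft <;> cases v.isLeft <;> simp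
  simp [dist, le_antisymm hle (Order.add_one_le_of_lt hlt)]

lemma dist_eq_dist_of_adj_iff (hG : G ≤ completeBipartiteGraph α β)
    (hcommon : ∀ u v, u.isLeft = v.isLeft → (G.commonNeighbors u v).Nonempty)
    (hside : u.isLeft = v.isLeft) (hwu : w ≠ u) (hwv : w ≠ v)
    (hadj : G.Adj u w ↔ G.Adj v w) : G.dist u w = G.dist v w := by
  by_cases hw : u.isLeft = w.isLeft
  · rw [dist_eq_two_of_isLeft_eq hG hcommon (Ne.symm hwu) hw,
      dist_eq_two_of_isLeft_eq hG hcommon (Ne.symm hwv) (hside ▸ hw)]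
  by_cases hu : G.Adj u w
  · rw [dist_eq_one_iff_adj.mpr hu, dist_eq_one_iff_adj.mpr (hadj.mp hu)]
  · rw [dist_eq_three_of_isLeft_ne hG hcommon hu hw,
      dist_eq_three_of_isLeft_ne hG hcommon (hadj.not.mp hu) (hside ▸ hw)]

end SimpleGraph

lemma Fintype.exists_ne_of_four_lt_card {α : Type*} [Fintype α] [DecidableEq α]
    (h : 4 < Fintype.card α) (a b c d : α) :
    ∃ x, x ≠ a ∧ x ≠ b ∧ x ≠ c ∧ x ≠ d := by
  obtain ⟨x, -, hx⟩ := Finset.exists_mem_notMem_of_card_lt_card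
    (s := {a, b, c, d}) (t := Finset.univ) (Finset.card_le_four.trans_lt h)
  simp only [Finset.mem_insert, Finset.mem_singleton, not_or] at hx
  exact ⟨x, hx⟩

lemma cycGraph_le_completeBipartiteGraph {m : ℕ} :
    cycGraph m ≤ completeBipartiteGraph (Fin m) (Fin m) := by
  rintro (i | i) (j | j) h <;> simp_all [cycGraph, completeBipartiteGraph]

variable {m : ℕ} [NeZero m]

def cycNext (m : ℕ) [NeZero m] : Fin m ⊕ Fin m → Fin m ⊕ Fin m
  | inl i => inr i
  | inr j => inl (j + 1)

@[simp] lemma isLeft_cycNext (u : Fin m ⊕ Fin m) : (cycNext m u).isLeft = !u.isLeft := by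
  cases u <;> rfl

lemma cycNext_injective : Function.Injective (cycNext m) := by
  rintro (i | i) (j | j) h <;> simp_all [cycNext]

lemma cycNext_cycNext_ne (hm : 2 ≤ m) (u : Fin m ⊕ Fin m) : cycNext m (cycNext m u) ≠ u := by
  have h1 : (1 : Fin m) ≠ 0 := by
    rw [Ne, Fin.ext_iff, Fin.val_one', Fin.val_zero, Nat.mod_eq_of_lt hm]; omega
  cases u <;> simpa [cycNext] using h1

lemma cycGraph_adj_iff {u v : Fin m ⊕ Fin m} :
    (cycGraph m).Adj u v ↔ u.isLeft ≠ v.isLeft ∧ v ≠ cycNext m u ∧ u ≠ cycNext m v := by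
  have hmod (i j : Fin m) : (i : ℕ) ≠ ((j : ℕ) + 1) % m ↔ i ≠ j + 1 := by
    rw [Ne, Ne, Fin.ext_iff, Fin.val_add, Fin.val_one', Nat.add_mod_mod]
  rcases u with i | i <;> rcases v with j | j <;>
    simp [cycGraph, cycNext, hmod, and_comm]

lemma cycGraph_commonNeighbors_nonempty (hm : 5 ≤ m) (u v : Fin m ⊕ Fin m)
    (hside : u.isLeft = v.isLeft) : ((cycGraph m).commonNeighbors u v).Nonempty := by
  have hcard : 4 < Fintype.card (Fin m) := by rw [Fintype.card_fin]; omega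
  rcases u with i | i <;> rcases v with j | j <;>
    simp only [isLeft_inl, isLeft_inr, Bool.false_eq_true, Bool.true_eq_false] at hside
  · obtain ⟨l, h⟩ := Fintype.exists_ne_of_four_lt_card hcard i j (i - 1) (j - 1)
    refine ⟨inr l, ?_⟩
    simp only [mem_commonNeighbors, cycGraph_adj_iff, cycNext, isLeft_inl, isLeft_inr, ne_eq,
      Bool.true_eq_false, not_false_eq_true, inr.injEq, inl.injEq, true_and]
    exact ⟨⟨h.1, fun e => h.2.2.1 (eq_sub_of_add_eq e.symm)⟩, h.2.1,
      fun e => h.2.2.2 (eq_sub_of_add_eq e.symm)⟩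
  · obtain ⟨l, h⟩ := Fintype.exists_ne_of_four_lt_card hcard i j (i + 1) (j + 1)
    refine ⟨inl l, ?_⟩
    simp only [mem_commonNeighbors, cycGraph_adj_iff, cycNext, isLeft_inl, isLeft_inr, ne_eq,
      Bool.false_eq_true, not_false_eq_true, inl.injEq, inr.injEq, true_and]
    exact ⟨⟨h.2.2.1, fun e => h.1 e.symm⟩, h.2.2.2, fun e => h.2.1 e.symm⟩

lemma cycGraph_adj_cycNext_iff (a w : Fin m ⊕ Fin m) (hwa : w ≠ a)
    (hw : w ≠ cycNext m (cycNext m (cycNext m (cycNext m a)))) :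
    (cycGraph m).Adj (cycNext m a) w ↔
      (cycGraph m).Adj (cycNext m (cycNext m (cycNext m a))) w := by
  simp only [cycGraph_adj_iff, isLeft_cycNext, Bool.not_not, cycNext_injective.ne_iff]
  exact ⟨fun ⟨h1, h2, _⟩ => ⟨h1, hw, Ne.symm h2⟩,
    fun ⟨h1, _, h3⟩ => ⟨h1, Ne.symm h3, hwa.symm⟩⟩

lemma cyc_add_one (a : ℕ) : cyc m (a + 1) = cycNext m (cyc m a) := by
  have hm : 0 < m := Nat.pos_of_ne_zero (NeZero.ne m)
  have hr : a % (2 * m) < 2 * m := Nat.mod_lt _ (by omega)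
  have hsucc : (a + 1) % (2 * m) = if a % (2 * m) + 1 < 2 * m then a % (2 * m) + 1 else 0 := by
    rw [Nat.add_mod, Nat.mod_eq_of_lt (show 1 < 2 * m by omega)]
    split_ifs with h
    · exact Nat.mod_eq_of_lt h
    · rw [show a % (2 * m) + 1 = 2 * m by omega, Nat.mod_self]
  have hval (i : Fin m) :
      ((i + 1 : Fin m) : ℕ) = if (i : ℕ) + 1 < m then (i : ℕ) + 1 else 0 := by
    rw [Fin.val_add, Fin.val_one', Nat.add_mod_mod]
    split_ifs with h
    · exact Nat.mod_eq_of_lt h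
    · rw [show (i : ℕ) + 1 = m by omega, Nat.mod_self]
  unfold cyc
  split_ifs <;> simp only [cycNext, reduceCtorEq, inl.injEq, inr.injEq, Fin.ext_iff, hval] <;>
    rw [hsucc] at * <;> split_ifs at * <;> omega

lemma cyc_add (a t : ℕ) : cyc m (a + t) = (cycNext m)^[t] (cyc m a) := by
  induction t with
  | zero => rfl
  | succ t ih => rw [← add_assoc, cyc_add_one, ih, Function.iterate_succ_apply']

lemma cyc_congr {a b : ℕ} (h : a % (2 * m) = b % (2 * m)) : cyc m a = cyc m b := by
  simp only [cyc, h]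

lemma cyc_mem_or_of_resolves (hm : 5 ≤ m) {W : Set (Fin m ⊕ Fin m)}
    (hW : Resolves (cycGraph m) W) (q : ℕ) :
    cyc m q ∈ W ∨ cyc m (q + 1) ∈ W ∨ cyc m (q + 3) ∈ W ∨ cyc m (q + 4) ∈ W := by
  by_contra! h
  obtain ⟨h0, h1, h3, h4⟩ := h
  simp only [cyc_add q, Function.iterate_succ_apply', Function.iterate_zero_apply] at h1 h3 h4
  refine cycNext_cycNext_ne (by omega) (cycNext m (cyc m q)) (hW _ _ fun w hw => ?_)
  exact dist_eq_dist_of_adj_iff cycGraph_le_completeBipartiteGraph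
    (cycGraph_commonNeighbors_nonempty hm) (by simp) (fun h => h3 (h ▸ hw))
    (fun h => h1 (h ▸ hw))
    (cycGraph_adj_cycNext_iff (cyc m q) w (fun h => h0 (h ▸ hw)) (fun h => h4 (h ▸ hw))).symm

lemma IsGap.of_mod_eq {W : Set (Fin m ⊕ Fin m)} {s s' k : ℕ} (h : IsGap m W s k)
    (hs : s % (2 * m) = s' % (2 * m)) : IsGap m W s' k := by
  have hshift (t : ℕ) : cyc m (s' + t) = cyc m (s + t) := by
    rw [cyc_add, cyc_add s, cyc_congr hs]
  obtain ⟨h0, h1, h2⟩ := h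
  refine ⟨cyc_congr hs ▸ h0, ?_, fun t ht1 htk => hshift t ▸ h2 t ht1 htk⟩
  rw [add_assoc, hshift, ← add_assoc]
  exact h1

lemma le_one_or_le_one_of_isGap (hm : 5 ≤ m) {W : Set (Fin m ⊕ Fin m)}
    (hW : Resolves (cycGraph m) W) {s k L : ℕ} (h₁ : IsGap m W s k)
    (h₂ : IsGap m W (s + k + 1) L) : k ≤ 1 ∨ L ≤ 1 := by
  by_contra! h
  rcases cyc_mem_or_of_resolves hm hW (s + k - 1) with h' | h' | h' | h'
  · exact h₁.2.2 (k - 1) (by omega) (by omega) (by rwa [← Nat.add_sub_assoc (by omega)])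
  · exact h₁.2.2 k (by omega) le_rfl (by rwa [show s + k - 1 + 1 = s + k by omega] at h')
  · exact h₂.2.2 1 le_rfl (by omega)
      (by rwa [show s + k - 1 + 3 = s + k + 1 + 1 by omega] at h')
  · exact h₂.2.2 2 (by omega) (by omega)
      (by rwa [show s + k - 1 + 4 = s + k + 1 + 2 by omega] at h')

theorem stmt9_general (m : ℕ) [NeZero m] (hm : 5 ≤ m) (W : Set (Fin m ⊕ Fin m))
    (hW : Resolves (cycGraph m) W) (s k : ℕ)
    (hg : IsGap m W s k) (hk2 : 2 ≤ k) :
    (∀ L, IsGap m W (s + k + 1) L → L ≤ 1) ∧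
    (∀ s' L, IsGap m W s' L → (s' + L + 1) % (2 * m) = s % (2 * m) → L ≤ 1) := by
  refine ⟨fun L hL => ?_, fun s' L hL hs => ?_⟩
  · exact (le_one_or_le_one_of_isGap hm hW hg hL).resolve_left (by omega)
  · exact (le_one_or_le_one_of_isGap hm hW hL (hg.of_mod_eq hs.symm)).resolve_right (by omega)

/-- for `m ≥ 5`, if a gap of a resolving set `W` of
`K_{m,m} \ E(C_{2m})` contains `k` vertices with `2 ≤ k ≤ 4`, then each of its
two neighboring gaps contains at most one vertex. -/
theorem stmt9 (m : ℕ) [NeZero m] (hm : 5 ≤ m) (W : Set (Fin m ⊕ Fin m))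
    (hW : Resolves (cycGraph m) W) (s k : ℕ)
    (hg : IsGap m W s k) (hk2 : 2 ≤ k) (hk4 : k ≤ 4) :
    (∀ L, IsGap m W (s + k + 1) L → L ≤ 1) ∧
    (∀ s' L, IsGap m W s' L → (s' + L + 1) % (2 * m) = s % (2 * m) → L ≤ 1) :=
  stmt9_general m hm W hW s k hg hk2
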